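/- Consider the 3×3 array of two-qubit Pauli observables (magic square): row 1 = (X⊗X, Y⊗Y, Z⊗Z), row 2 = (Y⊗Z, Z⊗X, X⊗Y), row 3 = (Z⊗Y, X⊗Z, Y⊗X). Then for every row j ∈ {1,2,3}, the product P_{j,1}·P_{j,2}·P_{j,3} equals −1 (minus the 4×4 identity matrix), and for every column k ∈ {1,2,3}, the product P_{1,k}·P_{2,k}·P_{3,k} equals +1 (the 4×4 identity matrix). -/
import Mathlib

open Matrix Kronecker

noncomputable section

abbrev M2 := Matrix (Fin 2) (Fin 2) ℂ
abbrev M4 := Matrix (Fin 2 × Fin 2) (Fin 2 × Fin 2) ℂ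

def PX : M2 := !![0, 1; 1, 0]
def PY : M2 := !![0, -Complex.I; Complex.I, 0]
def PZ : M2 := !![1, 0; 0, -1]

/-- The 3×3 magic square of two-qubit Pauli observables. -/
def magic : Fin 3 → Fin 3 → M4 :=
  ![![PX ⊗ₖ PX, PY ⊗ₖ PY, PZ ⊗ₖ PZ],
    ![PY ⊗ₖ PZ, PZ ⊗ₖ PX, PX ⊗ₖ PY],
    ![PZ ⊗ₖ PY, PX ⊗ₖ PZ, PY ⊗ₖ PX]]

lemma hXY : PX * PY = Complex.I • PZ := by
  simp [PX, PY, PZ, Matrix.mul_fin_two, Matrix.smul_of, Matrix.smul_cons]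
lemma hYX : PY * PX = (-Complex.I) • PZ := by
  simp [PX, PY, PZ, Matrix.mul_fin_two, Matrix.smul_of, Matrix.smul_cons]
lemma hYZ : PY * PZ = Complex.I • PX := by
  simp [PX, PY, PZ, Matrix.mul_fin_two, Matrix.smul_of, Matrix.smul_cons]
lemma hZY : PZ * PY = (-Complex.I) • PX := by
  simp [PX, PY, PZ, Matrix.mul_fin_two, Matrix.smul_of, Matrix.smul_cons]
lemma hZX : PZ * PX = Complex.I • PY := by
  simp [PX, PY, PZ, Matrix.mul_fin_two, Matrix.smul_of, Matrix.smul_cons]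
lemma hXZ : PX * PZ = (-Complex.I) • PY := by
  simp [PX, PY, PZ, Matrix.mul_fin_two, Matrix.smul_of, Matrix.smul_cons]
lemma hXX : PX * PX = 1 := by
  simp [PX, Matrix.mul_fin_two, Matrix.one_fin_two]
lemma hYY : PY * PY = 1 := by
  simp [PY, Matrix.mul_fin_two, Matrix.one_fin_two]
lemma hZZ : PZ * PZ = 1 := by
  simp [PZ, Matrix.mul_fin_two, Matrix.one_fin_two]

lemma kneg (A B : M2) : A ⊗ₖ (-B) = -(A ⊗ₖ B) := by
  ext ⟨i,j⟩ ⟨k,l⟩; simp [Matrix.kroneckerMap_apply]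

/-- In the magic square, every row multiplies to `−1` (minus the 4×4
identity) and every column multiplies to `+1` (the 4×4 identity). -/
theorem stmt5 :
    (∀ j : Fin 3, magic j 0 * magic j 1 * magic j 2 = -1) ∧
    (∀ k : Fin 3, magic 0 k * magic 1 k * magic 2 k = 1) := by
  constructor <;> intro j <;> fin_cases j <;>
    simp [magic, ← Matrix.mul_kronecker_mul,
      hXY, hYX, hYZ, hZY, hZX, hXZ, hXX, hYY, hZZ,
      Matrix.smul_mul, Matrix.mul_smul, Matrix.smul_kronecker, Matrix.kronecker_smul,
      Matrix.one_kronecker_one, smul_smul, Complex.I_mul_I, neg_smul, kneg]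

end
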